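/- arXiv:2001.11668 — 2 statements merged into one kernel-verified Lean document; each statement's English description precedes it below -/
import Mathlib

section
/- Let M be an n×n real symmetric matrix with eigenvalues λ_1 ≥ ... ≥ λ_n, and let 1 ≤ r < n. Then the Euclidean projection Π_{S_n}[M] of M onto the spectrahedron has rank at most r if and only if Σ_{i=1}^r λ_i ≥ 1 + r·λ_{r+1}. -/
/-!
Write `M = ∑ λᵢ vᵢ vᵢᵀ` and let `θ` be the water level with `∑ max (λᵢ - θ) 0 = 1`. Then
`Q = ∑ max (λᵢ - θ) 0 • vᵢ vᵢᵀ` lies in the spectrahedron and the residual `M - Q` has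
eigenvalues `min λᵢ θ ≤ θ`, with equality on the support of `Q`; hence
`⟪M - Q, Z - Q⟫ ≤ θ tr Z - θ tr Q = 0` for every `Z` in the spectrahedron, which forces every
nearest point `P` to equal `Q`. So `rank P ≤ r` iff `λ_{r+1} ≤ θ`, and by monotonicity of the
water level in `θ` this holds iff the `r` largest eigenvalues already carry a unit of water above
`λ_{r+1}`, i.e. `∑_{i ≤ r} (λᵢ - λ_{r+1}) ≥ 1`.
-/

open scoped BigOperators
open MeasureTheory
open scoped Matrix

namespace LRSGD

noncomputable def frobInner {n : ℕ} (A B : Matrix (Fin n) (Fin n) ℝ) : ℝ :=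
  Matrix.trace (A * Bᵀ)

noncomputable def frobNorm {n : ℕ} (A : Matrix (Fin n) (Fin n) ℝ) : ℝ :=
  Real.sqrt (∑ i, ∑ j, (A i j) ^ 2)

noncomputable def specNorm {n : ℕ} (A : Matrix (Fin n) (Fin n) ℝ) : ℝ :=
  sSup {s : ℝ | ∃ u : Fin n → ℝ, (∑ k, u k ^ 2) = 1 ∧
    s = Real.sqrt (∑ i, (A.mulVec u i) ^ 2)}

def spectrahedron (n : ℕ) : Set (Matrix (Fin n) (Fin n) ℝ) :=
  {X | X.PosSemidef ∧ X.trace = 1}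

def IsProjOn {n : ℕ} (S : Set (Matrix (Fin n) (Fin n) ℝ))
    (M P : Matrix (Fin n) (Fin n) ℝ) : Prop :=
  P ∈ S ∧ ∀ Z ∈ S, frobNorm (M - P) ≤ frobNorm (M - Z)

def IsEigenDecomp {n : ℕ} (M : Matrix (Fin n) (Fin n) ℝ)
    (lam : Fin n → ℝ) (v : Fin n → Fin n → ℝ) : Prop :=
  Antitone lam ∧
  (∀ i j, (∑ k, v i k * v j k) = if i = j then (1 : ℝ) else 0) ∧
  M = ∑ i, lam i • Matrix.vecMulVec (v i) (v i)

def IsGradient {n : ℕ} (f : Matrix (Fin n) (Fin n) ℝ → ℝ)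
    (g : Matrix (Fin n) (Fin n) ℝ → Matrix (Fin n) (Fin n) ℝ) : Prop :=
  ∀ X H : Matrix (Fin n) (Fin n) ℝ,
    HasDerivAt (fun t : ℝ => f (X + t • H)) (frobInner (g X) H) 0

def IsMinimizerOn {n : ℕ} (f : Matrix (Fin n) (Fin n) ℝ → ℝ)
    (S : Set (Matrix (Fin n) (Fin n) ℝ)) (Xs : Matrix (Fin n) (Fin n) ℝ) : Prop :=
  Xs ∈ S ∧ ∀ Y ∈ S, f Xs ≤ f Y

open Matrix Finset

section Frobenius

variable {n : ℕ}

lemma eq_of_norm_sub_le_of_inner_sub_nonpos {F : Type*} [NormedAddCommGroup F]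
    [InnerProductSpace ℝ F] {u p q : F} (hq : inner ℝ (u - q) (p - q) ≤ 0)
    (hp : ‖u - p‖ ≤ ‖u - q‖) : p = q := by
  have hpyth : ‖u - p‖ ^ 2 = ‖u - q‖ ^ 2 - 2 * inner ℝ (u - q) (p - q) + ‖p - q‖ ^ 2 := by
    rw [← norm_sub_sq_real, sub_sub_sub_cancel_right]
  have hsq : ‖u - p‖ ^ 2 ≤ ‖u - q‖ ^ 2 := pow_le_pow_left₀ (norm_nonneg _) hp 2
  have hpq : ‖p - q‖ ^ 2 ≤ 0 := by linarith
  exact sub_eq_zero.mp (norm_eq_zero.mp (pow_eq_zero_iff two_ne_zero |>.mp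
    (le_antisymm hpq (sq_nonneg _))))

noncomputable def frobToEuclidean :
    Matrix (Fin n) (Fin n) ℝ ≃ₗ[ℝ] EuclideanSpace ℝ (Fin n × Fin n) :=
  (LinearEquiv.curry ℝ ℝ (Fin n) (Fin n)).symm.trans (WithLp.linearEquiv 2 ℝ _).symm

@[simp]
lemma frobToEuclidean_apply (A : Matrix (Fin n) (Fin n) ℝ) (p : Fin n × Fin n) :
    frobToEuclidean A p = A p.1 p.2 := rfl

lemma inner_frobToEuclidean (A B : Matrix (Fin n) (Fin n) ℝ) :
    inner ℝ (frobToEuclidean A) (frobToEuclidean B) = frobInner A B := by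
  simp [frobInner, PiLp.inner_apply, Fintype.sum_prod_type, Matrix.trace, Matrix.mul_apply,
    mul_comm]

lemma norm_frobToEuclidean (A : Matrix (Fin n) (Fin n) ℝ) :
    ‖frobToEuclidean A‖ = frobNorm A := by
  simp [frobNorm, EuclideanSpace.norm_eq, Fintype.sum_prod_type]

lemma eq_of_frobNorm_sub_le_of_frobInner_sub_nonpos {M P Q : Matrix (Fin n) (Fin n) ℝ}
    (hQ : frobInner (M - Q) (P - Q) ≤ 0) (hP : frobNorm (M - P) ≤ frobNorm (M - Q)) :
    P = Q := by
  refine frobToEuclidean.injective (eq_of_norm_sub_le_of_inner_sub_nonpos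
    (u := frobToEuclidean M) ?_ ?_)
  · simpa only [← map_sub, inner_frobToEuclidean] using hQ
  · simpa only [← map_sub, norm_frobToEuclidean] using hP

end Frobenius

section OrthogonalConj

variable {ι : Type*} [Fintype ι] [DecidableEq ι]

lemma sum_smul_vecMulVec_self (v : ι → ι → ℝ) (c : ι → ℝ) :
    ∑ i, c i • vecMulVec (v i) (v i) = (of v)ᵀ * diagonal c * of v := by
  ext a b
  rw [Matrix.mul_assoc, mul_apply]
  simp only [Matrix.sum_apply, Matrix.smul_apply, vecMulVec_apply, smul_eq_mul,
    transpose_apply, diagonal_mul, of_apply]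
  exact Finset.sum_congr rfl fun i _ => by ring

lemma of_mul_transpose_eq_one {v : ι → ι → ℝ}
    (hv : ∀ i j, ∑ k, v i k * v j k = if i = j then (1 : ℝ) else 0) :
    of v * (of v)ᵀ = 1 := by
  ext i j
  simpa [mul_apply, one_apply] using hv i j

variable {U : Matrix ι ι ℝ}

lemma posSemidef_transpose_mul_diagonal_mul (U : Matrix ι ι ℝ) {c : ι → ℝ}
    (hc : ∀ i, 0 ≤ c i) : (Uᵀ * diagonal c * U).PosSemidef := by
  simpa using (posSemidef_diagonal_iff.mpr hc).conjTranspose_mul_mul_same U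

lemma trace_transpose_mul_diagonal_mul (hU : U * Uᵀ = 1) (c : ι → ℝ) :
    (Uᵀ * diagonal c * U).trace = ∑ i, c i := by
  rw [trace_mul_cycle, hU, one_mul, trace_diagonal]

lemma rank_transpose_mul_diagonal_mul (hU : U * Uᵀ = 1) (c : ι → ℝ) :
    (Uᵀ * diagonal c * U).rank = Fintype.card {i // c i ≠ 0} := by
  have hdet : IsUnit U.det := isUnit_det_of_right_inverse hU
  rw [rank_mul_eq_left_of_isUnit_det _ _ hdet,
    rank_mul_eq_right_of_isUnit_det _ _ (by rwa [det_transpose]), rank_diagonal]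

end OrthogonalConj

section FrobeniusConj

variable {n : ℕ} {U : Matrix (Fin n) (Fin n) ℝ}

lemma frobInner_transpose_mul_diagonal_mul (U Z : Matrix (Fin n) (Fin n) ℝ) (c : Fin n → ℝ) :
    frobInner (Uᵀ * diagonal c * U) Z = ∑ i, c i * (U * Zᵀ * Uᵀ) i i := by
  rw [frobInner, show Uᵀ * diagonal c * U * Zᵀ = Uᵀ * (diagonal c * (U * Zᵀ)) by
    simp only [Matrix.mul_assoc], trace_mul_comm, Matrix.mul_assoc]
  simp [Matrix.trace, diagonal_mul]

lemma frobInner_transpose_mul_diagonal_mul_self (hU : U * Uᵀ = 1) (c d : Fin n → ℝ) :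
    frobInner (Uᵀ * diagonal c * U) (Uᵀ * diagonal d * U) = ∑ i, c i * d i := by
  have hconj : U * (Uᵀ * diagonal d * U)ᵀ * Uᵀ = diagonal d := by
    simp only [transpose_mul, transpose_transpose, diagonal_transpose, ← Matrix.mul_assoc, hU,
      one_mul]
    rw [Matrix.mul_assoc, hU, mul_one]
  rw [frobInner_transpose_mul_diagonal_mul, hconj]
  simp

lemma diag_transpose_mul_nonneg (U : Matrix (Fin n) (Fin n) ℝ) {Z : Matrix (Fin n) (Fin n) ℝ}
    (hZ : Z.PosSemidef) (i : Fin n) : 0 ≤ (U * Zᵀ * Uᵀ) i i := by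
  simpa using (hZ.transpose.mul_mul_conjTranspose_same U).diag_nonneg

lemma sum_diag_mul_transpose_mul (hU : U * Uᵀ = 1) (Z : Matrix (Fin n) (Fin n) ℝ) :
    ∑ i, (U * Zᵀ * Uᵀ) i i = Z.trace := by
  change (U * Zᵀ * Uᵀ).trace = _
  rw [trace_mul_cycle, mul_eq_one_comm.mp hU, one_mul, trace_transpose]

end FrobeniusConj

section WaterFilling

variable {ι : Type*}

def waterFill (lam : ι → ℝ) (θ : ℝ) (i : ι) : ℝ := max (lam i - θ) 0

variable {lam : ι → ℝ} {θ : ℝ}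

lemma waterFill_nonneg (i : ι) : 0 ≤ waterFill lam θ i := le_max_right _ _

variable [Fintype ι]

lemma continuous_sum_waterFill (lam : ι → ℝ) :
    Continuous fun θ => ∑ i, waterFill lam θ i :=
  continuous_finsetSum _ fun _ _ => (continuous_const.sub continuous_id).max continuous_const

lemma exists_sum_waterFill_eq_one [Nonempty ι] (lam : ι → ℝ) :
    ∃ θ, ∑ i, waterFill lam θ i = 1 := by
  obtain ⟨i₀, hi₀⟩ := Finite.exists_max lam
  have hlow : 1 ≤ ∑ i, waterFill lam (lam i₀ - 1) i := by
    calc (1 : ℝ) = waterFill lam (lam i₀ - 1) i₀ := by simp [waterFill]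
      _ ≤ ∑ i, waterFill lam (lam i₀ - 1) i :=
        single_le_sum (fun i _ => waterFill_nonneg i) (mem_univ i₀)
  have hhigh : ∑ i, waterFill lam (lam i₀) i = 0 :=
    sum_eq_zero fun i _ => max_eq_right (sub_nonpos.mpr (hi₀ i))
  obtain ⟨θ, -, hθ⟩ := intermediate_value_Icc' (by linarith : lam i₀ - 1 ≤ lam i₀)
    (continuous_sum_waterFill lam).continuousOn ⟨hhigh.le.trans zero_le_one, hlow⟩
  exact ⟨θ, hθ⟩

lemma sum_sub_waterFill_mul_le (hθ : ∑ i, waterFill lam θ i = 1) {w : ι → ℝ}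
    (hw : ∀ i, 0 ≤ w i) (hw₁ : ∑ i, w i = 1) :
    ∑ i, (lam i - waterFill lam θ i) * w i
      ≤ ∑ i, (lam i - waterFill lam θ i) * waterFill lam θ i := by
  have hres : ∀ i, lam i - waterFill lam θ i ≤ θ := fun i => by
    unfold waterFill; rcases le_total (lam i) θ with h | h
    · rw [max_eq_right (by linarith)]; linarith
    · rw [max_eq_left (by linarith)]; linarith
  have hslack : ∀ i, (lam i - waterFill lam θ i) * waterFill lam θ i = θ * waterFill lam θ i :=
    fun i => by
      unfold waterFill; rcases le_total (lam i) θ with h | h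
      · rw [max_eq_right (by linarith)]; ring
      · rw [max_eq_left (by linarith)]; ring
  calc ∑ i, (lam i - waterFill lam θ i) * w i ≤ ∑ i, θ * w i :=
        sum_le_sum fun i _ => mul_le_mul_of_nonneg_right (hres i) (hw i)
    _ = ∑ i, (lam i - waterFill lam θ i) * waterFill lam θ i := by
        rw [← mul_sum, hw₁, sum_congr rfl fun i _ => hslack i, ← mul_sum, hθ]

omit [Fintype ι] in
lemma antitone_waterFill [Preorder ι] (hlam : Antitone lam) : Antitone (waterFill lam θ) :=
  fun _ _ hij => max_le_max (sub_le_sub_right (hlam hij) θ) le_rfl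

variable [LinearOrder ι] [LocallyFiniteOrderBot ι]

lemma waterFill_eq_zero_iff (hlam : Antitone lam) (hθ : ∑ i, waterFill lam θ i = 1) (k : ι) :
    waterFill lam θ k = 0 ↔ 1 ≤ ∑ j ∈ Iio k, (lam j - lam k) := by
  constructor
  · intro hk
    have hkθ : lam k ≤ θ := by simpa [waterFill] using hk
    have hsupp : ∀ i ∉ Iio k, waterFill lam θ i = 0 := fun i hi =>
      le_antisymm (hk ▸ antitone_waterFill hlam (not_lt.mp (by simpa using hi)))
        (waterFill_nonneg i)
    calc (1 : ℝ) = ∑ j ∈ Iio k, waterFill lam θ j := by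
          rw [← hθ, sum_subset (subset_univ _) fun i _ => hsupp i]
      _ ≤ ∑ j ∈ Iio k, (lam j - lam k) := sum_le_sum fun j hj => max_le
          (by linarith) (sub_nonneg.mpr (hlam (mem_Iio.mp hj).le))
  · intro hsum
    by_contra hk
    have hθk : θ < lam k := by
      by_contra h; exact hk (max_eq_right (by linarith))
    have hpos : ∀ j ∈ Iic k, waterFill lam θ j = lam j - θ := fun j hj =>
      max_eq_left (by linarith [hlam (mem_Iic.mp hj)])
    have hle : ∑ j ∈ Iic k, waterFill lam θ j ≤ 1 :=
      hθ ▸ sum_le_sum_of_subset_of_nonneg (subset_univ _) fun i _ _ => waterFill_nonneg i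
    rw [sum_congr rfl hpos, Iic_eq_cons_Iio, sum_cons] at hle
    have hIio : ∑ j ∈ Iio k, (lam j - lam k) ≤ ∑ j ∈ Iio k, (lam j - θ) :=
      sum_le_sum fun j _ => by linarith
    linarith

end WaterFilling

lemma Fin.card_ne_zero_le_iff_of_antitone {n : ℕ} {μ : Fin n → ℝ} (hμ : Antitone μ)
    (hμ₀ : ∀ i, 0 ≤ μ i) (k : Fin n) : Fintype.card {i // μ i ≠ 0} ≤ k ↔ μ k = 0 := by
  rw [Fintype.card_subtype]
  constructor
  · intro hcard
    by_contra hk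
    have hsub : Iic k ⊆ univ.filter (μ · ≠ 0) := fun i hi =>
      mem_filter.mpr ⟨mem_univ i, fun h => hk (le_antisymm (h ▸ hμ (mem_Iic.mp hi)) (hμ₀ k))⟩
    have := card_le_card hsub
    rw [Fin.card_Iic] at this
    omega
  · intro hk
    calc #(univ.filter (μ · ≠ 0)) ≤ #(Iio k) := card_le_card fun i hi => mem_Iio.mpr <|
          lt_of_not_ge fun hki => (mem_filter.mp hi).2 (le_antisymm (hk ▸ hμ hki) (hμ₀ i))
      _ = k := Fin.card_Iio k

lemma Fin.sum_Iio_mk_eq_sum_castLE {M : Type*} [AddCommMonoid M] {n r : ℕ} (hrn : r < n)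
    (f : Fin n → M) :
    ∑ j ∈ Iio ⟨r, hrn⟩, f j = ∑ i : Fin r, f (Fin.castLE hrn.le i) := by
  have hmap : univ.map (Fin.castLEEmb hrn.le) = Iio ⟨r, hrn⟩ := by
    ext j
    simp only [mem_Iio, mem_map, mem_univ, true_and, Fin.castLEEmb_apply]
    exact ⟨fun ⟨i, hi⟩ => hi ▸ i.isLt, fun h => ⟨⟨j, h⟩, rfl⟩⟩
  rw [← hmap, sum_map]
  rfl

section Projection

variable {n : ℕ} {U : Matrix (Fin n) (Fin n) ℝ} {lam : Fin n → ℝ} {θ : ℝ}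

lemma transpose_mul_diagonal_waterFill_mem_spectrahedron (hU : U * Uᵀ = 1)
    (hθ : ∑ i, waterFill lam θ i = 1) :
    Uᵀ * diagonal (waterFill lam θ) * U ∈ spectrahedron n :=
  ⟨posSemidef_transpose_mul_diagonal_mul U waterFill_nonneg,
    (trace_transpose_mul_diagonal_mul hU _).trans hθ⟩

lemma frobInner_sub_transpose_mul_diagonal_waterFill_nonpos (hU : U * Uᵀ = 1)
    (hθ : ∑ i, waterFill lam θ i = 1) {Z : Matrix (Fin n) (Fin n) ℝ}
    (hZ : Z ∈ spectrahedron n) :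
    frobInner (Uᵀ * diagonal lam * U - Uᵀ * diagonal (waterFill lam θ) * U)
      (Z - Uᵀ * diagonal (waterFill lam θ) * U) ≤ 0 := by
  rw [← Matrix.sub_mul, ← Matrix.mul_sub, diagonal_sub, frobInner, Matrix.transpose_sub,
    Matrix.mul_sub, trace_sub, ← frobInner, ← frobInner, frobInner_transpose_mul_diagonal_mul,
    frobInner_transpose_mul_diagonal_mul_self hU, sub_nonpos]
  exact sum_sub_waterFill_mul_le hθ (diag_transpose_mul_nonneg U hZ.1)
    ((sum_diag_mul_transpose_mul hU Z).trans hZ.2)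

lemma IsProjOn.eq_transpose_mul_diagonal_waterFill (hU : U * Uᵀ = 1)
    (hθ : ∑ i, waterFill lam θ i = 1) {P : Matrix (Fin n) (Fin n) ℝ}
    (hP : IsProjOn (spectrahedron n) (Uᵀ * diagonal lam * U) P) :
    P = Uᵀ * diagonal (waterFill lam θ) * U :=
  eq_of_frobNorm_sub_le_of_frobInner_sub_nonpos
    (frobInner_sub_transpose_mul_diagonal_waterFill_nonpos hU hθ hP.1)
    (hP.2 _ (transpose_mul_diagonal_waterFill_mem_spectrahedron hU hθ))

end Projection

theorem stmt1_general (n r : ℕ) (hrn : r < n)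
    (M : Matrix (Fin n) (Fin n) ℝ)
    (lam : Fin n → ℝ) (v : Fin n → Fin n → ℝ)
    (hdecomp : IsEigenDecomp M lam v)
    (P : Matrix (Fin n) (Fin n) ℝ)
    (hP : IsProjOn (spectrahedron n) M P) :
    P.rank ≤ r ↔
      1 + (r : ℝ) * lam ⟨r, hrn⟩ ≤ ∑ i : Fin r, lam (Fin.castLE hrn.le i) := by
  obtain ⟨hlam, hv, rfl⟩ := hdecomp
  have : Nonempty (Fin n) := ⟨⟨r, hrn⟩⟩
  obtain ⟨θ, hθ⟩ := exists_sum_waterFill_eq_one lam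
  rw [sum_smul_vecMulVec_self] at hP
  have hU := of_mul_transpose_eq_one hv
  rw [hP.eq_transpose_mul_diagonal_waterFill hU hθ, rank_transpose_mul_diagonal_mul hU,
    Fin.card_ne_zero_le_iff_of_antitone (antitone_waterFill hlam) waterFill_nonneg ⟨r, hrn⟩,
    waterFill_eq_zero_iff hlam hθ, sum_sub_distrib, sum_const, Fin.card_Iio, nsmul_eq_mul,
    Fin.sum_Iio_mk_eq_sum_castLE]
  constructor <;> intro h <;> linarith

/-- rank of the projection onto the spectrahedron is at most r iff
`Σ_{i=1}^r λ_i ≥ 1 + r·λ_{r+1}`. -/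
theorem stmt1 (n r : ℕ) (hr : 1 ≤ r) (hrn : r < n)
    (M : Matrix (Fin n) (Fin n) ℝ) (hM : M.IsSymm)
    (lam : Fin n → ℝ) (v : Fin n → Fin n → ℝ)
    (hdecomp : IsEigenDecomp M lam v)
    (P : Matrix (Fin n) (Fin n) ℝ)
    (hP : IsProjOn (spectrahedron n) M P) :
    P.rank ≤ r ↔
      1 + (r : ℝ) * lam ⟨r, hrn⟩ ≤ ∑ i : Fin r, lam (Fin.castLE hrn.le i) :=
  stmt1_general n r hrn M lam v hdecomp P hP

end LRSGD
end

section
/- Let f : 𝕊^n → ℝ be convex and differentiable, and let X* be a minimizer of f over the spectrahedron S_n with rank(X*) = r. Let V* ∈ ℝ^{n×r} be a matrix whose columns form an orthonormal basis of eigenvectors spanning the range of X*. Then ⟨V* V*ᵀ, ∇f(X*)⟩ = r · λ_n(∇f(X*)), where ⟨A, B⟩ = Tr(A Bᵀ) is the trace inner product. -/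
open scoped BigOperators
open MeasureTheory
open scoped Matrix

namespace LRSGD

/-!
First-order optimality of `X*` on the convex set `Sₙ` says `⟨G, X*⟩ ≤ ⟨G, Z⟩` for every `Z ∈ Sₙ`,
where `G = ∇f(X*)`. Testing `Z = w wᵀ` for a unit eigenvector `w` of `λₙ(G)` gives
`⟨G, X*⟩ ≤ λₙ(G)`. On the other hand, writing `X* = ∑ dᵢ vᵢ vᵢᵀ` with `dᵢ > 0`, `∑ dᵢ = 1`,
`⟨G, X*⟩ = ∑ dᵢ vᵢᵀ G vᵢ` is a convex combination of Rayleigh quotients, each at least `λₙ(G)`.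
Hence every `vᵢᵀ G vᵢ` equals `λₙ(G)`, and `⟨V Vᵀ, G⟩ = ∑ vᵢᵀ G vᵢ = r λₙ(G)`.
-/

theorem IsMinOn.nonneg_of_hasDerivAt_add_smul_sub {E : Type*} [AddCommGroup E] [Module ℝ E]
    {S : Set E} {f : E → ℝ} {x z : E} {c : ℝ} (hS : Convex ℝ S) (hmin : IsMinOn f S x)
    (hx : x ∈ S) (hz : z ∈ S) (hc : HasDerivAt (fun t : ℝ => f (x + t • (z - x))) c 0) :
    0 ≤ c := by
  have hloc : IsLocalMinOn (fun t : ℝ => f (x + t • (z - x))) (Set.Icc 0 1) 0 := by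
    refine IsMinOn.localize fun t ht => ?_
    simpa using hmin (hS.add_smul_sub_mem hx hz ht)
  have hone : (1 : ℝ) ∈ posTangentConeAt (Set.Icc (0 : ℝ) 1) 0 :=
    mem_posTangentConeAt_of_segment_subset (by simp [segment_eq_Icc])
  simpa using hloc.hasFDerivWithinAt_nonneg hc.hasDerivWithinAt.hasFDerivWithinAt hone

theorem eq_of_sum_mul_le_of_le {ι 𝕜 : Type*} [Fintype ι] [Field 𝕜] [LinearOrder 𝕜]
    [IsStrictOrderedRing 𝕜] {d q : ι → 𝕜} {m : 𝕜} (hd : ∀ i, 0 < d i) (hsum : ∑ i, d i = 1)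
    (hq : ∀ i, m ≤ q i) (hle : ∑ i, d i * q i ≤ m) (i : ι) : q i = m := by
  have hterm : ∀ j ∈ Finset.univ, 0 ≤ d j * (q j - m) := fun j _ =>
    mul_nonneg (hd j).le (sub_nonneg.2 (hq j))
  have hzero : ∑ j, d j * (q j - m) = 0 := by
    refine le_antisymm ?_ (Finset.sum_nonneg hterm)
    simpa [mul_sub, Finset.sum_sub_distrib, ← Finset.sum_mul, hsum] using hle
  have := (Finset.sum_eq_zero_iff_of_nonneg hterm).1 hzero i (Finset.mem_univ i)
  linarith [(mul_eq_zero.1 this).resolve_left (hd i).ne']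

theorem mul_diagonal_mul_transpose_eq_sum {m ι R : Type*} [Fintype ι] [DecidableEq ι]
    [CommSemiring R] (V : Matrix m ι R) (d : ι → R) :
    V * Matrix.diagonal d * Vᵀ = ∑ i, d i • Matrix.vecMulVec (V.col i) (V.col i) := by
  ext a b
  rw [Matrix.mul_apply]
  simp [Matrix.mul_diagonal, Matrix.sum_apply, Matrix.vecMulVec_apply]
  exact Finset.sum_congr rfl fun i _ => by ring

theorem trace_mul_diagonal_mul_transpose {m ι R : Type*} [Fintype m] [Fintype ι] [DecidableEq ι]
    [CommSemiring R] {V : Matrix m ι R} (hV : Vᵀ * V = 1) (d : ι → R) :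
    (V * Matrix.diagonal d * Vᵀ).trace = ∑ i, d i := by
  rw [Matrix.trace_mul_comm, ← Matrix.mul_assoc, hV, Matrix.one_mul, Matrix.trace_diagonal]

theorem sum_sq_dotProduct_of_orthonormal {ι : Type*} [Fintype ι] [DecidableEq ι]
    {v : ι → ι → ℝ} (hv : ∀ i j, (∑ k, v i k * v j k) = if i = j then (1 : ℝ) else 0)
    (u : ι → ℝ) : ∑ k, (v k ⬝ᵥ u) ^ 2 = u ⬝ᵥ u := by
  set W : Matrix ι ι ℝ := Matrix.of v
  have hWWt : W * Wᵀ = 1 := by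
    ext i j
    simpa [W, Matrix.mul_apply, Matrix.one_apply] using hv i j
  calc ∑ k, (v k ⬝ᵥ u) ^ 2 = (W *ᵥ u) ⬝ᵥ (W *ᵥ u) := by
        simp [dotProduct, sq, W, Matrix.mulVec]
    _ = u ⬝ᵥ (Wᵀ * W) *ᵥ u := by
        rw [← Matrix.mulVec_mulVec, Matrix.dotProduct_mulVec u, Matrix.vecMul_transpose]
    _ = u ⬝ᵥ u := by rw [mul_eq_one_comm.mp hWWt, Matrix.one_mulVec]

section FrobeniusInner

variable {n : ℕ}

theorem frobInner_comm (A B : Matrix (Fin n) (Fin n) ℝ) : frobInner A B = frobInner B A := by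
  rw [frobInner, frobInner, ← Matrix.trace_transpose, Matrix.transpose_mul,
    Matrix.transpose_transpose]

theorem frobInner_sub_right (A B C : Matrix (Fin n) (Fin n) ℝ) :
    frobInner A (B - C) = frobInner A B - frobInner A C := by
  simp [frobInner, Matrix.transpose_sub, Matrix.mul_sub, Matrix.trace_sub]

theorem frobInner_vecMulVec_self (M : Matrix (Fin n) (Fin n) ℝ) (x : Fin n → ℝ) :
    frobInner M (Matrix.vecMulVec x x) = x ⬝ᵥ M *ᵥ x := by
  rw [frobInner, Matrix.transpose_vecMulVec, Matrix.mul_vecMulVec, Matrix.trace_vecMulVec,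
    dotProduct_comm]

theorem frobInner_sum_smul_vecMulVec {ι : Type*} [Fintype ι]
    (M : Matrix (Fin n) (Fin n) ℝ) (c : ι → ℝ) (u : ι → Fin n → ℝ) :
    frobInner M (∑ i, c i • Matrix.vecMulVec (u i) (u i)) = ∑ i, c i * (u i ⬝ᵥ M *ᵥ u i) := by
  simp [frobInner, Matrix.transpose_sum, Matrix.mul_sum, Matrix.trace_sum, Matrix.trace_smul,
    ← frobInner_vecMulVec_self]

end FrobeniusInner

namespace IsEigenDecomp

variable {n : ℕ} {M : Matrix (Fin n) (Fin n) ℝ} {lam : Fin n → ℝ} {v : Fin n → Fin n → ℝ}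

theorem dotProduct_mulVec (h : IsEigenDecomp M lam v) (u : Fin n → ℝ) :
    u ⬝ᵥ M *ᵥ u = ∑ k, lam k * (v k ⬝ᵥ u) ^ 2 := by
  rw [← frobInner_vecMulVec_self, frobInner_comm, h.2.2, frobInner_sum_smul_vecMulVec]
  simp [Matrix.vecMulVec_mulVec, dotProduct_comm u, sq]

theorem dotProduct_mulVec_self (h : IsEigenDecomp M lam v) (i : Fin n) :
    v i ⬝ᵥ M *ᵥ v i = lam i := by
  rw [h.dotProduct_mulVec]
  simp [dotProduct, h.2.1]

theorem mul_dotProduct_self_le (h : IsEigenDecomp M lam v) {i : Fin n}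
    (hi : ∀ j, lam i ≤ lam j) (u : Fin n → ℝ) :
    lam i * (u ⬝ᵥ u) ≤ u ⬝ᵥ M *ᵥ u := by
  rw [h.dotProduct_mulVec, ← sum_sq_dotProduct_of_orthonormal h.2.1, Finset.mul_sum]
  gcongr with k
  exact hi k

end IsEigenDecomp

theorem convex_spectrahedron (n : ℕ) : Convex ℝ (spectrahedron n) := by
  rintro X ⟨hX, htrX⟩ Z ⟨hZ, htrZ⟩ a b ha hb hab
  refine ⟨(hX.smul ha).add (hZ.smul hb), ?_⟩
  simp [Matrix.trace_add, Matrix.trace_smul, htrX, htrZ, hab]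

theorem vecMulVec_self_mem_spectrahedron {n : ℕ} {x : Fin n → ℝ} (hx : x ⬝ᵥ x = 1) :
    Matrix.vecMulVec x x ∈ spectrahedron n :=
  ⟨by simpa using Matrix.posSemidef_vecMulVec_self_star x, by simpa using hx⟩

theorem IsMinimizerOn.frobInner_le {n : ℕ} {f : Matrix (Fin n) (Fin n) ℝ → ℝ}
    {g : Matrix (Fin n) (Fin n) ℝ → Matrix (Fin n) (Fin n) ℝ} {S : Set (Matrix (Fin n) (Fin n) ℝ)}
    {X Z : Matrix (Fin n) (Fin n) ℝ} (hgrad : IsGradient f g) (hS : Convex ℝ S)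
    (hmin : IsMinimizerOn f S X) (hZ : Z ∈ S) : frobInner (g X) X ≤ frobInner (g X) Z := by
  have h := IsMinOn.nonneg_of_hasDerivAt_add_smul_sub hS (isMinOn_iff.2 hmin.2) hmin.1 hZ
    (hgrad X (Z - X))
  rw [frobInner_sub_right] at h
  linarith

/-- ⟨V*V*ᵀ, ∇f(X*)⟩ = r·λ_n(∇f(X*)). -/
theorem stmt5 (n r : ℕ) (hn : 1 ≤ n)
    (f : Matrix (Fin n) (Fin n) ℝ → ℝ)
    (g : Matrix (Fin n) (Fin n) ℝ → Matrix (Fin n) (Fin n) ℝ)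
    (hgrad : IsGradient f g)
    (Xstar : Matrix (Fin n) (Fin n) ℝ)
    (hmin : IsMinimizerOn f (spectrahedron n) Xstar)
    (V : Matrix (Fin n) (Fin r) ℝ)
    (horth : Vᵀ * V = 1)
    (d : Fin r → ℝ) (hd : ∀ i, 0 < d i)
    (hXdecomp : Xstar = V * Matrix.diagonal d * Vᵀ)
    (mu : Fin n → ℝ) (w : Fin n → Fin n → ℝ)
    (hmu : IsEigenDecomp (g Xstar) mu w) :
    frobInner (V * Vᵀ) (g Xstar) = (r : ℝ) * mu ⟨n - 1, by omega⟩ := by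
  set G := g Xstar
  set N : Fin n := ⟨n - 1, by omega⟩
  set q : Fin r → ℝ := fun i => V.col i ⬝ᵥ G *ᵥ V.col i
  have hweighted (c : Fin r → ℝ) :
      frobInner G (V * Matrix.diagonal c * Vᵀ) = ∑ i, c i * q i := by
    rw [mul_diagonal_mul_transpose_eq_sum, frobInner_sum_smul_vecMulVec]
  have hq (i : Fin r) : mu N ≤ q i := by
    have hunit : V.col i ⬝ᵥ V.col i = 1 := by
      simpa [Matrix.mul_apply, dotProduct] using congrFun (congrFun horth i) i
    simpa [hunit] using hmu.mul_dotProduct_self_le (i := N)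
      (fun k => hmu.1 (Fin.le_def.2 (Nat.le_sub_one_of_lt k.2))) (V.col i)
  have hX : frobInner G Xstar = ∑ i, d i * q i := by rw [← hweighted, ← hXdecomp]
  have hle : ∑ i, d i * q i ≤ mu N := by
    have hwN : w N ⬝ᵥ w N = 1 := by simpa [dotProduct] using hmu.2.1 N N
    have hopt := hmin.frobInner_le hgrad (convex_spectrahedron n)
      (vecMulVec_self_mem_spectrahedron hwN)
    rwa [frobInner_vecMulVec_self, hmu.dotProduct_mulVec_self, hX] at hopt
  have htrace : ∑ i, d i = 1 := by
    rw [← trace_mul_diagonal_mul_transpose horth, ← hXdecomp, hmin.1.2]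
  have hqN := eq_of_sum_mul_le_of_le hd htrace hq hle
  have hVVt := hweighted fun _ => 1
  simp only [Matrix.diagonal_one, Matrix.mul_one, one_mul, hqN] at hVVt
  simp [frobInner_comm, hVVt]

end LRSGD
end
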